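/- arXiv:2602.19204 — 6 statements merged into one kernel-verified Lean document; each statement's English description precedes it below -/
import Mathlib

section
/- Suppose the initial data satisfy E‖x_0^i − x_0^j‖² < ∞ for all i, j ∈ {1,…,N}. Then for every n ≥ 0 and all i, j ∈ {1,…,N}, the exact one-step identity E‖x_{n+1}^i − x_{n+1}^j‖² = (1 − h(2λ₀ − λ₀²h − σ²)) · E‖x_n^i − x_n^j‖² holds. -/
/-!
In the difference `x^i - x^j` the drift towards `M_n` and the mean-field term `λ₁ (x̄_n - M_n)`
cancel, so each coordinate of the difference is multiplied by `1 - λ₀ h - σ W^l_{h,n}`. The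
difference at time `n` is measurable with respect to `σ(x_0, W_{h,0}, …, W_{h,n-1})`, of which
`W_{h,n}` is independent, so the expectation of the squared product factors, and
`E (1 - λ₀ h - σ W)² = (1 - λ₀ h)² + σ² h = 1 - h (2 λ₀ - λ₀² h - σ²)` for `W ~ N(0, h)`.
-/

open MeasureTheory ProbabilityTheory
open scoped NNReal

lemma ProbabilityTheory.gaussianReal_map_const_sub_mul (c s μ : ℝ) (v : ℝ≥0) :
    (gaussianReal μ v).map (fun x => c - s * x)
      = gaussianReal (c - s * μ) (.mk (s ^ 2) (sq_nonneg s) * v) := by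
  rw [← gaussianReal_map_const_sub c, ← gaussianReal_map_const_mul s,
    Measure.map_map (by fun_prop) (by fun_prop)]
  rfl

lemma ProbabilityTheory.integral_sq_gaussianReal (μ : ℝ) (v : ℝ≥0) :
    ∫ x, x ^ 2 ∂gaussianReal μ v = μ ^ 2 + v := by
  have := variance_eq_sub (memLp_id_gaussianReal (μ := μ) (v := v) 2)
  simp only [variance_id_gaussianReal, id, integral_id_gaussianReal, Pi.pow_apply] at this
  linarith

lemma ProbabilityTheory.integral_sq_const_sub_mul_gaussianReal (c s μ : ℝ) (v : ℝ≥0) :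
    ∫ x, (c - s * x) ^ 2 ∂gaussianReal μ v = (c - s * μ) ^ 2 + s ^ 2 * v := by
  rw [← integral_map (φ := fun x => c - s * x) (f := fun y => y ^ 2) (by fun_prop) (by fun_prop),
    gaussianReal_map_const_sub_mul, integral_sq_gaussianReal]
  simp

lemma ProbabilityTheory.integrable_sq_const_sub_mul_gaussianReal (c s μ : ℝ) (v : ℝ≥0) :
    Integrable (fun x => (c - s * x) ^ 2) (gaussianReal μ v) :=
  ((memLp_const c).sub ((memLp_id_gaussianReal 2).const_mul s)).integrable_sq

namespace ProbabilityTheory.HasLaw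

variable {Ω : Type*} [MeasurableSpace Ω] {P : Measure Ω} {Y : Ω → ℝ} {μ : ℝ} {v : ℝ≥0}

lemma integrable_sq_const_sub_mul (hY : HasLaw Y (gaussianReal μ v) P) (c s : ℝ) :
    Integrable (fun ω => (c - s * Y ω) ^ 2) P := by
  have := integrable_sq_const_sub_mul_gaussianReal c s μ v
  rw [← hY.map_eq] at this
  exact (integrable_map_measure (by fun_prop) hY.aemeasurable).1 this

lemma integral_sq_const_sub_mul (hY : HasLaw Y (gaussianReal μ v) P) (c s : ℝ) :
    ∫ ω, (c - s * Y ω) ^ 2 ∂P = (c - s * μ) ^ 2 + s ^ 2 * v := by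
  rw [← integral_sq_const_sub_mul_gaussianReal, ← hY.integral_comp (by fun_prop)]
  rfl

end ProbabilityTheory.HasLaw

lemma ProbabilityTheory.Indep.indepFun_of_measurable {Ω β γ : Type*}
    {m₁ m₂ mΩ : MeasurableSpace Ω} [MeasurableSpace β] [MeasurableSpace γ] {P : Measure Ω}
    {f : Ω → β} {g : Ω → γ} (hind : Indep m₁ m₂ P) (hf : Measurable[m₁] f)
    (hg : Measurable[m₂] g) : IndepFun f g P :=
  (IndepFun_iff_Indep f g P).2 <|
    indep_of_indep_of_le_right (indep_of_indep_of_le_left hind hf.comap_le) hg.comap_le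

section PastSigma

variable {Ω ι E F : Type*} [MeasurableSpace E] [MeasurableSpace F]

abbrev pastSigma (x₀ : ι → Ω → E) (W : ℕ → Ω → F) (n : ℕ) : MeasurableSpace Ω :=
  (⨆ i, MeasurableSpace.comap (x₀ i) inferInstance) ⊔
    ⨆ k : Fin n, MeasurableSpace.comap (W k) inferInstance

variable {x₀ : ι → Ω → E} {W : ℕ → Ω → F}

lemma pastSigma_mono : Monotone (pastSigma x₀ W) := fun _ n hmn =>
  sup_le_sup_left (iSup_le fun k =>
    le_iSup (fun k : Fin n => MeasurableSpace.comap (W k) inferInstance) (Fin.castLE hmn k)) _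

lemma measurable_pastSigma_zero (i : ι) : Measurable[pastSigma x₀ W 0] (x₀ i) :=
  measurable_iff_comap_le.2 <|
    (le_iSup (fun i => MeasurableSpace.comap (x₀ i) inferInstance) i).trans le_sup_left

lemma measurable_pastSigma_succ (n : ℕ) : Measurable[pastSigma x₀ W (n + 1)] (W n) :=
  measurable_iff_comap_le.2 <|
    (le_iSup (fun k : Fin (n + 1) => MeasurableSpace.comap (W k) inferInstance)
      (Fin.last n)).trans le_sup_right

end PastSigma

def IsAdCBOScheme {Ω : Type*} {d N : ℕ} (h lam0 lam1 sigma : ℝ)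
    (W M : ℕ → Ω → Fin d → ℝ) (x : ℕ → Fin N → Ω → Fin d → ℝ) : Prop :=
  ∀ n i ω l, x (n + 1) i ω l = x n i ω l - lam0 * h * (x n i ω l - M n ω l)
    - lam1 * h * ((1 / (N : ℝ)) * ∑ j, x n j ω l - M n ω l)
    - sigma * (x n i ω l - M n ω l) * W n ω l

namespace IsAdCBOScheme

variable {Ω : Type*} {d N : ℕ} {h lam0 lam1 sigma : ℝ} {W M : ℕ → Ω → Fin d → ℝ}
  {x : ℕ → Fin N → Ω → Fin d → ℝ}

lemma sub_succ_eq_mul (hx : IsAdCBOScheme h lam0 lam1 sigma W M x) (n : ℕ) (i j : Fin N) (ω : Ω)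
    (l : Fin d) : x (n + 1) i ω l - x (n + 1) j ω l
      = (x n i ω l - x n j ω l) * (1 - lam0 * h - sigma * W n ω l) := by
  rw [hx, hx]
  ring

lemma measurable_pastSigma (hx : IsAdCBOScheme h lam0 lam1 sigma W M x)
    (hM : ∀ n, Measurable[pastSigma (x 0) W n] (M n)) (n : ℕ) (i : Fin N) :
    Measurable[pastSigma (x 0) W n] (x n i) := by
  induction n generalizing i with
  | zero => exact measurable_pastSigma_zero i
  | succ n ih =>
    have hle := pastSigma_mono (x₀ := x 0) (W := W) n.le_succ
    have hxn : ∀ j, Measurable[pastSigma (x 0) W (n + 1)] (x n j) := fun j => (ih j).mono hle le_rfl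
    have hMn := (hM n).mono hle le_rfl
    have hWn := measurable_pastSigma_succ (x₀ := x 0) (W := W) n
    rw [show x (n + 1) i = _ from funext₂ (hx n i)]
    fun_prop

variable [MeasurableSpace Ω] {P : Measure Ω}

lemma indepFun_sq_sub (hx : IsAdCBOScheme h lam0 lam1 sigma W M x)
    (hM : ∀ n, Measurable[pastSigma (x 0) W n] (M n))
    (hWpast : ∀ n, Indep (MeasurableSpace.comap (W n) inferInstance) (pastSigma (x 0) W n) P)
    (n : ℕ) (i j : Fin N) (l : Fin d) (c : ℝ) :
    IndepFun (fun ω => (x n i ω l - x n j ω l) ^ 2) (fun ω => (c - sigma * W n ω l) ^ 2) P := by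
  have hxi := hx.measurable_pastSigma hM n i
  have hxj := hx.measurable_pastSigma hM n j
  have hW : Measurable[MeasurableSpace.comap (W n) inferInstance] (W n) := comap_measurable _
  exact (hWpast n).symm.indepFun_of_measurable (by fun_prop) (by fun_prop)

lemma integrable_sq_sub (hx : IsAdCBOScheme h lam0 lam1 sigma W M x)
    (hM : ∀ n, Measurable[pastSigma (x 0) W n] (M n))
    (hWpast : ∀ n, Indep (MeasurableSpace.comap (W n) inferInstance) (pastSigma (x 0) W n) P)
    (hx₀ : ∀ i, Measurable (x 0 i))
    (hW : ∀ n l, Integrable (fun ω => (1 - lam0 * h - sigma * W n ω l) ^ 2) P)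
    (hint : ∀ i j, Integrable (fun ω => ∑ l, (x 0 i ω l - x 0 j ω l) ^ 2) P)
    (n : ℕ) (i j : Fin N) (l : Fin d) :
    Integrable (fun ω => (x n i ω l - x n j ω l) ^ 2) P := by
  induction n with
  | zero =>
    refine (hint i j).mono' (by fun_prop) (ae_of_all _ fun ω => ?_)
    rw [Real.norm_of_nonneg (sq_nonneg _)]
    exact Finset.single_le_sum (f := fun l => (x 0 i ω l - x 0 j ω l) ^ 2)
      (fun _ _ => sq_nonneg _) (Finset.mem_univ l)
  | succ n ih =>
    simp_rw [hx.sub_succ_eq_mul, mul_pow]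
    exact (hx.indepFun_sq_sub hM hWpast n i j l _).integrable_mul ih (hW n l)

lemma integral_sq_sub_succ (hx : IsAdCBOScheme h lam0 lam1 sigma W M x)
    (hM : ∀ n, Measurable[pastSigma (x 0) W n] (M n))
    (hWpast : ∀ n, Indep (MeasurableSpace.comap (W n) inferInstance) (pastSigma (x 0) W n) P)
    (n : ℕ) (i j : Fin N) (l : Fin d)
    (hD : Integrable (fun ω => (x n i ω l - x n j ω l) ^ 2) P)
    (hW : Integrable (fun ω => (1 - lam0 * h - sigma * W n ω l) ^ 2) P) :
    ∫ ω, (x (n + 1) i ω l - x (n + 1) j ω l) ^ 2 ∂P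
      = (∫ ω, (1 - lam0 * h - sigma * W n ω l) ^ 2 ∂P) * ∫ ω, (x n i ω l - x n j ω l) ^ 2 ∂P := by
  simp_rw [hx.sub_succ_eq_mul, mul_pow]
  rw [(hx.indepFun_sq_sub hM hWpast n i j l _).integral_fun_mul_eq_mul_integral
    hD.aestronglyMeasurable hW.aestronglyMeasurable, mul_comm]

end IsAdCBOScheme

theorem adCBO_one_step_identity_general
    {Ω : Type*} [MeasurableSpace Ω] (P : Measure Ω)
    (d N : ℕ) (h lam0 lam1 sigma : ℝ)
    (hh : 0 < h)
    (W : ℕ → Ω → Fin d → ℝ) (x : ℕ → Fin N → Ω → Fin d → ℝ)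
    (M : ℕ → Ω → Fin d → ℝ)
    (hWmeas : ∀ n, Measurable (W n))
    (hxmeas : ∀ n i, Measurable (x n i))
    (hWlaw : ∀ n l, Measure.map (fun ω => W n ω l) P
      = gaussianReal 0 (Real.toNNReal h))
    -- `W_{h,n}` is independent of `σ(x_0^1, …, x_0^N, W_{h,0}, …, W_{h,n−1})`
    (hWpast : ∀ n, Indep (MeasurableSpace.comap (W n) inferInstance)
      ((⨆ i : Fin N, MeasurableSpace.comap (x 0 i) inferInstance) ⊔
        (⨆ k : Fin n, MeasurableSpace.comap (W k) inferInstance)) P)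
    -- `M_n` is measurable w.r.t. `σ(x_0^1, …, x_0^N, W_{h,0}, …, W_{h,n−1})`
    (hMmeas : ∀ n, @Measurable Ω (Fin d → ℝ)
      ((⨆ i : Fin N, MeasurableSpace.comap (x 0 i) inferInstance) ⊔
        (⨆ k : Fin n, MeasurableSpace.comap (W k) inferInstance)) _ (M n))
    -- the Ad-CBO recursion
    (hrec : ∀ n i ω l,
      x (n+1) i ω l = x n i ω l - lam0 * h * (x n i ω l - M n ω l)
        - lam1 * h * ((1 / (N : ℝ)) * ∑ j, x n j ω l - M n ω l)
        - sigma * (x n i ω l - M n ω l) * W n ω l)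
    -- finite second moments of the initial data
    (hint : ∀ i j : Fin N,
      Integrable (fun ω => ∑ l, (x 0 i ω l - x 0 j ω l) ^ 2) P) :
    ∀ (n : ℕ) (i j : Fin N),
      ∫ ω, ∑ l, (x (n+1) i ω l - x (n+1) j ω l) ^ 2 ∂P
        = (1 - h * (2 * lam0 - lam0 ^ 2 * h - sigma ^ 2))
          * ∫ ω, ∑ l, (x n i ω l - x n j ω l) ^ 2 ∂P := by
  intro n i j
  have hx : IsAdCBOScheme h lam0 lam1 sigma W M x := hrec
  have hWlaw' (n : ℕ) (l : Fin d) :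
      HasLaw (fun ω => W n ω l) (gaussianReal 0 h.toNNReal) P := ⟨by fun_prop, hWlaw n l⟩
  have hG (n : ℕ) (l : Fin d) := (hWlaw' n l).integrable_sq_const_sub_mul (1 - lam0 * h) sigma
  have hD := hx.integrable_sq_sub hMmeas hWpast (hxmeas 0) hG hint
  rw [integral_finsetSum _ fun l _ => hD (n + 1) i j l,
    integral_finsetSum _ fun l _ => hD n i j l, Finset.mul_sum]
  refine Finset.sum_congr rfl fun l _ => ?_
  rw [hx.integral_sq_sub_succ hMmeas hWpast n i j l (hD n i j l) (hG n l),
    (hWlaw' n l).integral_sq_const_sub_mul, Real.coe_toNNReal _ hh.le]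
  ring

/-- One-step identity for the discrete Ad-CBO scheme:
`E‖x_{n+1}^i − x_{n+1}^j‖² = (1 − h(2λ₀ − λ₀²h − σ²)) E‖x_n^i − x_n^j‖²`. -/
theorem adCBO_one_step_identity
    {Ω : Type*} [MeasurableSpace Ω] (P : Measure Ω) [IsProbabilityMeasure P]
    (d N : ℕ) (h lam0 lam1 sigma : ℝ)
    (hh : 0 < h) (hlam0 : 0 < lam0) (hlam1 : 0 ≤ lam1) (hsigma : 0 ≤ sigma)
    (W : ℕ → Ω → Fin d → ℝ) (x : ℕ → Fin N → Ω → Fin d → ℝ)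
    (M : ℕ → Ω → Fin d → ℝ)
    (hWmeas : ∀ n, Measurable (W n))
    (hxmeas : ∀ n i, Measurable (x n i))
    -- all scalar noise components (over time and coordinate) are independent,
    -- each distributed as `N(0, h)`
    (hWindep : iIndepFun
      (fun (p : ℕ × Fin d) ω => W p.1 ω p.2) P)
    (hWlaw : ∀ n l, Measure.map (fun ω => W n ω l) P
      = gaussianReal 0 (Real.toNNReal h))
    -- `W_{h,n}` is independent of `σ(x_0^1, …, x_0^N, W_{h,0}, …, W_{h,n−1})`
    (hWpast : ∀ n, Indep (MeasurableSpace.comap (W n) inferInstance)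
      ((⨆ i : Fin N, MeasurableSpace.comap (x 0 i) inferInstance) ⊔
        (⨆ k : Fin n, MeasurableSpace.comap (W k) inferInstance)) P)
    -- `M_n` is measurable w.r.t. `σ(x_0^1, …, x_0^N, W_{h,0}, …, W_{h,n−1})`
    (hMmeas : ∀ n, @Measurable Ω (Fin d → ℝ)
      ((⨆ i : Fin N, MeasurableSpace.comap (x 0 i) inferInstance) ⊔
        (⨆ k : Fin n, MeasurableSpace.comap (W k) inferInstance)) _ (M n))
    -- the Ad-CBO recursion
    (hrec : ∀ n i ω l,
      x (n+1) i ω l = x n i ω l - lam0 * h * (x n i ω l - M n ω l)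
        - lam1 * h * ((1 / (N : ℝ)) * ∑ j, x n j ω l - M n ω l)
        - sigma * (x n i ω l - M n ω l) * W n ω l)
    -- finite second moments of the initial data
    (hint : ∀ i j : Fin N,
      Integrable (fun ω => ∑ l, (x 0 i ω l - x 0 j ω l) ^ 2) P) :
    ∀ (n : ℕ) (i j : Fin N),
      ∫ ω, ∑ l, (x (n+1) i ω l - x (n+1) j ω l) ^ 2 ∂P
        = (1 - h * (2 * lam0 - lam0 ^ 2 * h - sigma ^ 2))
          * ∫ ω, ∑ l, (x n i ω l - x n j ω l) ^ 2 ∂P :=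
  adCBO_one_step_identity_general P d N h lam0 lam1 sigma hh W x M hWmeas hxmeas hWlaw hWpast hMmeas
    hrec hint
end

section
/- Suppose the initial data satisfy E‖x_0^i − x_0^j‖² < ∞ for all i, j ∈ {1,…,N}. Then for every n ∈ ℕ and all i, j ∈ {1,…,N}, E‖x_n^i − x_n^j‖² ≤ e^{−nh(2λ₀ − λ₀²h − σ²)} · E‖x_0^i − x_0^j‖². -/
/-!
In a difference of two particles the consensus point `Mₙ` and the drift towards the mean
cancel: each coordinate of `zₙ = xₙⁱ - xₙʲ` obeys `zₙ₊₁ = (1 - λ₀h - σWₙ) zₙ`. The noise `Wₙ` is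
independent of the past, to which `zₙ` belongs, so each step multiplies `E zₙ²` by exactly
`E(1 - λ₀h - σWₙ)² = (1 - λ₀h)² + σ²h = 1 - h(2λ₀ - λ₀²h - σ²) ≤ e^{-h(2λ₀ - λ₀²h - σ²)}`.
-/

open MeasureTheory ProbabilityTheory

open scoped NNReal

namespace ProbabilityTheory

lemma integral_sq_gaussianReal_zero (v : ℝ≥0) : ∫ w, w ^ 2 ∂gaussianReal 0 v = v := by
  rw [← variance_of_integral_eq_zero (X := fun w => w) aemeasurable_id integral_id_gaussianReal]
  exact variance_fun_id_gaussianReal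

lemma integrable_sub_mul_sq_gaussianReal (v : ℝ≥0) (a s : ℝ) :
    Integrable (fun w => (a - s * w) ^ 2) (gaussianReal 0 v) :=
  ((memLp_const a).sub ((memLp_id_gaussianReal 2).const_mul s)).integrable_sq

lemma integral_sub_mul_sq_gaussianReal (v : ℝ≥0) (a s : ℝ) :
    ∫ w, (a - s * w) ^ 2 ∂gaussianReal 0 v = a ^ 2 + s ^ 2 * v := by
  have h1 : Integrable (fun w : ℝ => -(2 * a * s) * w) (gaussianReal 0 v) :=
    ((memLp_id_gaussianReal 1).integrable le_rfl).const_mul _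
  have h2 : Integrable (fun w : ℝ => s ^ 2 * w ^ 2) (gaussianReal 0 v) :=
    (memLp_id_gaussianReal 2).integrable_sq.const_mul _
  have hexpand : ∀ w : ℝ, (a - s * w) ^ 2 = a ^ 2 + (-(2 * a * s) * w + s ^ 2 * w ^ 2) :=
    fun w => by ring
  simp_rw [hexpand]
  rw [integral_add (integrable_const _) (h1.fun_add h2), integral_add h1 h2, integral_const_mul,
    integral_const_mul, integral_id_gaussianReal, integral_sq_gaussianReal_zero]
  simp

end ProbabilityTheory

namespace MeasureTheory

variable {Ω : Type*} {m : MeasurableSpace Ω}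

def Filtration.initialAndNoise {ι E F : Type*} [MeasurableSpace E] [MeasurableSpace F]
    {X : ι → Ω → E} {W : ℕ → Ω → F} (hX : ∀ i, Measurable (X i))
    (hW : ∀ n, Measurable (W n)) : Filtration ℕ m where
  seq n := (⨆ i, MeasurableSpace.comap (X i) inferInstance) ⊔
    ⨆ k : Fin n, MeasurableSpace.comap (W k) inferInstance
  mono' n n' hnn' := by
    refine sup_le_sup_left (iSup_le fun k => ?_) _
    exact le_iSup (fun k : Fin n' => MeasurableSpace.comap (W k) inferInstance) (Fin.castLE hnn' k)
  le' _ := sup_le (iSup_le fun i => (hX i).comap_le) (iSup_le fun k => (hW k).comap_le)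

section initialAndNoise

variable {ι E F : Type*} [MeasurableSpace E] [MeasurableSpace F]
  {X : ι → Ω → E} {W : ℕ → Ω → F} (hX : ∀ i, Measurable (X i)) (hW : ∀ n, Measurable (W n))

lemma Filtration.measurable_initial_initialAndNoise (i : ι) :
    Measurable[Filtration.initialAndNoise hX hW 0] (X i) :=
  (comap_measurable (X i)).mono (le_sup_of_le_left (le_iSup_of_le i le_rfl)) le_rfl

lemma Filtration.measurable_noise_initialAndNoise (n : ℕ) :
    Measurable[Filtration.initialAndNoise hX hW (n + 1)] (W n) :=
  (comap_measurable (W n)).mono (le_sup_of_le_right (le_iSup_of_le (Fin.last n) le_rfl)) le_rfl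

end initialAndNoise

lemma Integrable.of_sum_of_nonneg {ι : Type*} {P : Measure Ω} {s : Finset ι} {f : ι → Ω → ℝ}
    (hf : Integrable (fun ω => ∑ i ∈ s, f i ω) P) (hf₀ : ∀ i ∈ s, ∀ ω, 0 ≤ f i ω)
    {i : ι} (hi : i ∈ s) (hfi : AEStronglyMeasurable (f i) P) : Integrable (f i) P :=
  hf.mono' hfi <| ae_of_all _ fun ω => by
    rw [Real.norm_of_nonneg (hf₀ i hi ω)]
    exact Finset.single_le_sum (fun j hj => hf₀ j hj ω) hi

end MeasureTheory

namespace ProbabilityTheory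

variable {Ω β : Type*} {m : MeasurableSpace Ω} [MeasurableSpace β] {P : Measure Ω}
  {ℱ : Filtration ℕ m} {ζ : ℕ → Ω → ℝ} {ξ : ℕ → Ω → β} {g : β → ℝ}

lemma measurable_of_succ_eq_mul (hg : Measurable g) (hζ₀ : Measurable[ℱ 0] (ζ 0))
    (hξ : ∀ n, Measurable[ℱ (n + 1)] (ξ n)) (hrec : ∀ n ω, ζ (n + 1) ω = g (ξ n ω) * ζ n ω) :
    ∀ n, Measurable[ℱ n] (ζ n)
  | 0 => hζ₀
  | n + 1 => by
    rw [show ζ (n + 1) = fun ω => g (ξ n ω) * ζ n ω from funext (hrec n)]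
    exact (hg.comp (hξ n)).mul
      ((measurable_of_succ_eq_mul hg hζ₀ hξ hrec n).mono (ℱ.mono n.le_succ) le_rfl)

lemma integral_sq_eq_pow_mul_of_succ_eq_mul {μ : Measure β} (hg : Measurable g)
    (hgμ : Integrable (fun b => g b ^ 2) μ) (hlaw : ∀ n, P.map (ξ n) = μ)
    (hindep : ∀ n, Indep (MeasurableSpace.comap (ξ n) inferInstance) (ℱ n) P)
    (hζ₀ : Measurable[ℱ 0] (ζ 0)) (hξ : ∀ n, Measurable[ℱ (n + 1)] (ξ n))
    (hrec : ∀ n ω, ζ (n + 1) ω = g (ξ n ω) * ζ n ω)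
    (hint : Integrable (fun ω => ζ 0 ω ^ 2) P) (n : ℕ) :
    Integrable (fun ω => ζ n ω ^ 2) P ∧
      ∫ ω, ζ n ω ^ 2 ∂P = (∫ b, g b ^ 2 ∂μ) ^ n * ∫ ω, ζ 0 ω ^ 2 ∂P := by
  induction n with
  | zero => simp [hint]
  | succ n ih =>
    have hξm : Measurable (ξ n) := (hξ n).mono (ℱ.le _) le_rfl
    have hsq : (fun ω => ζ (n + 1) ω ^ 2) = fun ω => g (ξ n ω) ^ 2 * ζ n ω ^ 2 := by
      funext ω; rw [hrec, mul_pow]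
    have hind : IndepFun (fun ω => g (ξ n ω) ^ 2) (fun ω => ζ n ω ^ 2) P := by
      have : IndepFun (ξ n) (ζ n) P := indep_of_indep_of_le_right (hindep n)
        (measurable_of_succ_eq_mul hg hζ₀ hξ hrec n).comap_le
      exact this.comp (hg.pow_const 2) (measurable_id.pow_const 2)
    have hgξ : Integrable (fun ω => g (ξ n ω) ^ 2) P := by
      rw [← hlaw n] at hgμ
      exact hgμ.comp_measurable hξm
    have hmean : ∫ ω, g (ξ n ω) ^ 2 ∂P = ∫ b, g b ^ 2 ∂μ := by
      rw [← hlaw n, integral_map hξm.aemeasurable (hg.pow_const 2).aestronglyMeasurable]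
    rw [hsq]
    refine ⟨hind.integrable_mul hgξ ih.1, ?_⟩
    rw [hind.integral_fun_mul_eq_mul_integral hgξ.aestronglyMeasurable ih.1.aestronglyMeasurable,
      hmean, ih.2, pow_succ]
    ring

end ProbabilityTheory

lemma Real.pow_le_exp_nat_mul_sub_one {c : ℝ} (hc : 0 ≤ c) (n : ℕ) :
    c ^ n ≤ Real.exp (n * (c - 1)) := by
  rw [Real.exp_nat_mul]
  exact pow_le_pow_left₀ hc (by linarith [Real.add_one_le_exp (c - 1)]) n

theorem adCBO_consensus_decay_general
    {Ω : Type*} [MeasurableSpace Ω] (P : Measure Ω) [IsProbabilityMeasure P]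
    (d N : ℕ) (h lam0 lam1 sigma : ℝ)
    (hh : 0 < h)
    (W : ℕ → Ω → Fin d → ℝ) (x : ℕ → Fin N → Ω → Fin d → ℝ)
    (M : ℕ → Ω → Fin d → ℝ)
    (hWmeas : ∀ n, Measurable (W n))
    (hxmeas : ∀ n i, Measurable (x n i))
    (hWlaw : ∀ n l, Measure.map (fun ω => W n ω l) P
      = gaussianReal 0 (Real.toNNReal h))
    -- `W_{h,n}` is independent of `σ(x_0^1, …, x_0^N, W_{h,0}, …, W_{h,n−1})`
    (hWpast : ∀ n, Indep (MeasurableSpace.comap (W n) inferInstance)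
      ((⨆ i : Fin N, MeasurableSpace.comap (x 0 i) inferInstance) ⊔
        (⨆ k : Fin n, MeasurableSpace.comap (W k) inferInstance)) P)
    -- the Ad-CBO recursion
    (hrec : ∀ n i ω l,
      x (n+1) i ω l = x n i ω l - lam0 * h * (x n i ω l - M n ω l)
        - lam1 * h * ((1 / (N : ℝ)) * ∑ j, x n j ω l - M n ω l)
        - sigma * (x n i ω l - M n ω l) * W n ω l)
    -- finite second moments of the initial data
    (hint : ∀ i j : Fin N,
      Integrable (fun ω => ∑ l, (x 0 i ω l - x 0 j ω l) ^ 2) P) :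
    ∀ (n : ℕ) (i j : Fin N),
      ∫ ω, ∑ l, (x n i ω l - x n j ω l) ^ 2 ∂P
        ≤ Real.exp (-(n : ℝ) * h * (2 * lam0 - lam0 ^ 2 * h - sigma ^ 2))
          * ∫ ω, ∑ l, (x 0 i ω l - x 0 j ω l) ^ 2 ∂P := by
  intro n i j
  set ℱ := Filtration.initialAndNoise (hxmeas 0) hWmeas
  set c := (1 - lam0 * h) ^ 2 + sigma ^ 2 * h
  have hcoord (l : Fin d) (n : ℕ) :
      Integrable (fun ω => (x n i ω l - x n j ω l) ^ 2) P ∧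
        ∫ ω, (x n i ω l - x n j ω l) ^ 2 ∂P = c ^ n * ∫ ω, (x 0 i ω l - x 0 j ω l) ^ 2 ∂P := by
    have hx₀ (i : Fin N) : Measurable[ℱ 0] (fun ω => x 0 i ω l) :=
      (measurable_pi_apply l).comp (Filtration.measurable_initial_initialAndNoise (hxmeas 0) hWmeas i)
    have hint₀ : Integrable (fun ω => (x 0 i ω l - x 0 j ω l) ^ 2) P :=
      (hint i j).of_sum_of_nonneg (fun _ _ _ => sq_nonneg _) (Finset.mem_univ l)
        ((((measurable_pi_apply l).comp (hxmeas 0 i)).sub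
          ((measurable_pi_apply l).comp (hxmeas 0 j))).pow_const 2).aestronglyMeasurable
    have hdiff (k : ℕ) (ω : Ω) : x (k + 1) i ω l - x (k + 1) j ω l
        = (1 - lam0 * h - sigma * W k ω l) * (x k i ω l - x k j ω l) := by
      rw [hrec, hrec]; ring
    have := integral_sq_eq_pow_mul_of_succ_eq_mul (ℱ := ℱ)
      (ζ := fun k ω => x k i ω l - x k j ω l) (g := fun w => 1 - lam0 * h - sigma * w)
      (by fun_prop) (integrable_sub_mul_sq_gaussianReal _ _ _) (fun k => hWlaw k l)
      (fun k => indep_of_indep_of_le_left (hWpast k)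
        ((measurable_pi_apply l).comp (comap_measurable (W k))).comap_le)
      ((hx₀ i).sub (hx₀ j))
      (fun k => (measurable_pi_apply l).comp
        (Filtration.measurable_noise_initialAndNoise (hxmeas 0) hWmeas k))
      hdiff hint₀ n
    rwa [integral_sub_mul_sq_gaussianReal, Real.coe_toNNReal _ hh.le] at this
  have hdecay : c ^ n ≤ Real.exp (-(n : ℝ) * h * (2 * lam0 - lam0 ^ 2 * h - sigma ^ 2)) := by
    calc c ^ n ≤ Real.exp (n * (c - 1)) := Real.pow_le_exp_nat_mul_sub_one (by positivity) n
      _ = _ := by congr 1; simp only [c]; ring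
  calc ∫ ω, ∑ l, (x n i ω l - x n j ω l) ^ 2 ∂P
      = ∑ l, ∫ ω, (x n i ω l - x n j ω l) ^ 2 ∂P :=
        integral_finsetSum _ fun l _ => (hcoord l n).1
    _ = c ^ n * ∫ ω, ∑ l, (x 0 i ω l - x 0 j ω l) ^ 2 ∂P := by
        rw [integral_finsetSum _ fun l _ => (hcoord l 0).1, Finset.mul_sum]
        exact Finset.sum_congr rfl fun l _ => (hcoord l n).2
    _ ≤ _ := mul_le_mul_of_nonneg_right hdecay
        (integral_nonneg fun ω => Finset.sum_nonneg fun l _ => sq_nonneg _)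

/-- Exponential decay of pairwise second moments for Ad-CBO:
`E‖x_n^i − x_n^j‖² ≤ e^{−nh(2λ₀ − λ₀²h − σ²)} E‖x_0^i − x_0^j‖²`. -/
theorem adCBO_consensus_decay
    {Ω : Type*} [MeasurableSpace Ω] (P : Measure Ω) [IsProbabilityMeasure P]
    (d N : ℕ) (h lam0 lam1 sigma : ℝ)
    (hh : 0 < h) (hlam0 : 0 < lam0) (hlam1 : 0 ≤ lam1) (hsigma : 0 ≤ sigma)
    (W : ℕ → Ω → Fin d → ℝ) (x : ℕ → Fin N → Ω → Fin d → ℝ)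
    (M : ℕ → Ω → Fin d → ℝ)
    (hWmeas : ∀ n, Measurable (W n))
    (hxmeas : ∀ n i, Measurable (x n i))
    -- all scalar noise components (over time and coordinate) are independent,
    -- each distributed as `N(0, h)`
    (hWindep : iIndepFun
      (fun (p : ℕ × Fin d) ω => W p.1 ω p.2) P)
    (hWlaw : ∀ n l, Measure.map (fun ω => W n ω l) P
      = gaussianReal 0 (Real.toNNReal h))
    -- `W_{h,n}` is independent of `σ(x_0^1, …, x_0^N, W_{h,0}, …, W_{h,n−1})`
    (hWpast : ∀ n, Indep (MeasurableSpace.comap (W n) inferInstance)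
      ((⨆ i : Fin N, MeasurableSpace.comap (x 0 i) inferInstance) ⊔
        (⨆ k : Fin n, MeasurableSpace.comap (W k) inferInstance)) P)
    -- `M_n` is measurable w.r.t. `σ(x_0^1, …, x_0^N, W_{h,0}, …, W_{h,n−1})`
    (hMmeas : ∀ n, @Measurable Ω (Fin d → ℝ)
      ((⨆ i : Fin N, MeasurableSpace.comap (x 0 i) inferInstance) ⊔
        (⨆ k : Fin n, MeasurableSpace.comap (W k) inferInstance)) _ (M n))
    -- the Ad-CBO recursion
    (hrec : ∀ n i ω l,
      x (n+1) i ω l = x n i ω l - lam0 * h * (x n i ω l - M n ω l)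
        - lam1 * h * ((1 / (N : ℝ)) * ∑ j, x n j ω l - M n ω l)
        - sigma * (x n i ω l - M n ω l) * W n ω l)
    -- finite second moments of the initial data
    (hint : ∀ i j : Fin N,
      Integrable (fun ω => ∑ l, (x 0 i ω l - x 0 j ω l) ^ 2) P) :
    ∀ (n : ℕ) (i j : Fin N),
      ∫ ω, ∑ l, (x n i ω l - x n j ω l) ^ 2 ∂P
        ≤ Real.exp (-(n : ℝ) * h * (2 * lam0 - lam0 ^ 2 * h - sigma ^ 2))
          * ∫ ω, ∑ l, (x 0 i ω l - x 0 j ω l) ^ 2 ∂P :=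
  adCBO_consensus_decay_general P d N h lam0 lam1 sigma hh W x M hWmeas hxmeas hWlaw hWpast hrec
    hint
end

section
/- Pathwise (for every sample point ω), for every n ∈ ℕ, every coordinate l ∈ {1,…,d}, and every i ∈ {1,…,N}, one has x_n^{i,l} − x̄_n^l = (∏_{k=0}^{n−1} (1 − λ₀h − σ W_{h,k}^l)) · (x_0^{i,l} − x̄_0^l), where x̄_n^l denotes the l-th component of the ensemble mean x̄_n. -/
open MeasureTheory ProbabilityTheory Filter

/-!
In each coordinate, one step applies to every particle the same affine map
`y ↦ (1 - λ₀h - σW) y + b`, whose shift `b` (built from `M_n` and the mean) is shared by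
all particles. The shift cancels in the deviation from the mean, so each step multiplies
the deviation by the slope `1 - λ₀h - σW`.
-/

theorem eq_prod_range_mul_of_succ {M : Type*} [CommMonoid M] {u a : ℕ → M}
    (hu : ∀ n, u (n + 1) = a n * u n) (n : ℕ) :
    u n = (∏ k ∈ Finset.range n, a k) * u 0 := by
  induction n with
  | zero => simp
  | succ n ih => rw [hu, ih, Finset.prod_range_succ, mul_comm (a n), mul_right_comm]

theorem sub_average_eq_mul_of_affine {K ι : Type*} [Field K] [CharZero K] [Fintype ι]
    {f g : ι → K} {a b : K} (hg : ∀ j, g j = a * f j + b) (i : ι) :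
    g i - 1 / (Fintype.card ι : K) * ∑ j, g j
      = a * (f i - 1 / (Fintype.card ι : K) * ∑ j, f j) := by
  have : Nonempty ι := ⟨i⟩
  have hcard : (Fintype.card ι : K) ≠ 0 := Nat.cast_ne_zero.mpr Fintype.card_ne_zero
  simp only [hg, Finset.sum_add_distrib, ← Finset.mul_sum, Finset.sum_const,
    Finset.card_univ, nsmul_eq_mul]
  field_simp
  ring

theorem adCBO_pathwise_deviation_general
    {Ω : Type*}
    (d N : ℕ) (h lam0 lam1 sigma : ℝ)
    (W : ℕ → Ω → Fin d → ℝ) (x : ℕ → Fin N → Ω → Fin d → ℝ)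
    (M : ℕ → Ω → Fin d → ℝ)
    -- the Ad-CBO recursion
    (hrec : ∀ n i ω l,
      x (n+1) i ω l = x n i ω l - lam0 * h * (x n i ω l - M n ω l)
        - lam1 * h * ((1 / (N : ℝ)) * ∑ j, x n j ω l - M n ω l)
        - sigma * (x n i ω l - M n ω l) * W n ω l)
    :
    ∀ (ω : Ω) (n : ℕ) (l : Fin d) (i : Fin N),
      x n i ω l - (1 / (N : ℝ)) * ∑ j, x n j ω l
        = (∏ k ∈ Finset.range n, (1 - lam0 * h - sigma * W k ω l))
          * (x 0 i ω l - (1 / (N : ℝ)) * ∑ j, x 0 j ω l) := by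
  intro ω n l i
  refine eq_prod_range_mul_of_succ (u := fun n => x n i ω l - 1 / (N : ℝ) * ∑ j, x n j ω l)
    (fun n => ?_) n
  have step := sub_average_eq_mul_of_affine (f := fun j => x n j ω l)
    (g := fun j => x (n + 1) j ω l) (a := 1 - lam0 * h - sigma * W n ω l)
    (b := (lam0 * h + lam1 * h + sigma * W n ω l) * M n ω l
      - lam1 * h * (1 / (N : ℝ) * ∑ j, x n j ω l))
    (fun j => by rw [hrec]; ring) i
  simpa only [Fintype.card_fin] using step

/-- Pathwise deviation-from-mean identity for Ad-CBO. -/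
theorem adCBO_pathwise_deviation
    {Ω : Type*} [MeasurableSpace Ω] (P : Measure Ω) [IsProbabilityMeasure P]
    (d N : ℕ) (h lam0 lam1 sigma : ℝ)
    (hh : 0 < h) (hlam0 : 0 < lam0) (hlam1 : 0 ≤ lam1) (hsigma : 0 ≤ sigma)
    (W : ℕ → Ω → Fin d → ℝ) (x : ℕ → Fin N → Ω → Fin d → ℝ)
    (M : ℕ → Ω → Fin d → ℝ)
    (hWmeas : ∀ n, Measurable (W n))
    (hxmeas : ∀ n i, Measurable (x n i))
    -- all scalar noise components (over time and coordinate) are independent,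
    -- each distributed as `N(0, h)`
    (hWindep : iIndepFun
      (fun (p : ℕ × Fin d) ω => W p.1 ω p.2) P)
    (hWlaw : ∀ n l, Measure.map (fun ω => W n ω l) P
      = gaussianReal 0 (Real.toNNReal h))
    -- `W_{h,n}` is independent of `σ(x_0^1, …, x_0^N, W_{h,0}, …, W_{h,n−1})`
    (hWpast : ∀ n, Indep (MeasurableSpace.comap (W n) inferInstance)
      ((⨆ i : Fin N, MeasurableSpace.comap (x 0 i) inferInstance) ⊔
        (⨆ k : Fin n, MeasurableSpace.comap (W k) inferInstance)) P)
    -- `M_n` is measurable w.r.t. `σ(x_0^1, …, x_0^N, W_{h,0}, …, W_{h,n−1})`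
    (hMmeas : ∀ n, @Measurable Ω (Fin d → ℝ)
      ((⨆ i : Fin N, MeasurableSpace.comap (x 0 i) inferInstance) ⊔
        (⨆ k : Fin n, MeasurableSpace.comap (W k) inferInstance)) _ (M n))
    -- the Ad-CBO recursion
    (hrec : ∀ n i ω l,
      x (n+1) i ω l = x n i ω l - lam0 * h * (x n i ω l - M n ω l)
        - lam1 * h * ((1 / (N : ℝ)) * ∑ j, x n j ω l - M n ω l)
        - sigma * (x n i ω l - M n ω l) * W n ω l)
    :
    ∀ (ω : Ω) (n : ℕ) (l : Fin d) (i : Fin N),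
      x n i ω l - (1 / (N : ℝ)) * ∑ j, x n j ω l
        = (∏ k ∈ Finset.range n, (1 - lam0 * h - sigma * W k ω l))
          * (x 0 i ω l - (1 / (N : ℝ)) * ∑ j, x 0 j ω l) :=
  adCBO_pathwise_deviation_general d N h lam0 lam1 sigma W x M hrec
end

section
/- Pathwise (for every sample point ω), for every n ∈ ℕ and every coordinate l ∈ {1,…,d}, one has max_{i,j∈{1,…,N}} |x_n^{i,l} − x_n^{j,l}| = (∏_{k=0}^{n−1} |1 − λ₀h − σ W_{h,k}^l|) · max_{i,j∈{1,…,N}} |x_0^{i,l} − x_0^{j,l}| (the absolute values are necessary since the random scaling factor 1 − λ₀h − σ W_{h,k}^l may take either sign). -/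
/-!
In one coordinate the drift towards `M_n` and the collective term `λ₁ h (x̄_n − M_n)` are the same
for every particle, so they cancel in `x_{n+1}^i − x_{n+1}^j`: each step multiplies all pairwise
differences by the common factor `1 − λ₀h − σ W_{h,n}^l`. Taking absolute values and the supremum
over pairs, the diameter is multiplied by its absolute value.
-/

open MeasureTheory ProbabilityTheory Filter

theorem sub_cbo_step_sub_cbo_step (a b s m c w y z : ℝ) :
    (y - a * (y - m) - b * (c - m) - s * (y - m) * w)
      - (z - a * (z - m) - b * (c - m) - s * (z - m) * w)
      = (1 - a - s * w) * (y - z) := by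
  ring

section Diameter

variable {ι : Type*}

theorem iSup_iSup_abs_sub_of_sub_eq_mul {f g : ι → ℝ} {c : ℝ}
    (hfg : ∀ i j, g i - g j = c * (f i - f j)) :
    (⨆ i, ⨆ j, |g i - g j|) = |c| * ⨆ i, ⨆ j, |f i - f j| := by
  simp only [hfg, abs_mul]
  rw [Real.mul_iSup_of_nonneg (abs_nonneg c)]
  exact iSup_congr fun i => (Real.mul_iSup_of_nonneg (abs_nonneg c) _).symm

theorem iSup_iSup_abs_sub_eq_prod_of_sub_eq_mul {u : ℕ → ι → ℝ} {c : ℕ → ℝ}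
    (hu : ∀ n i j, u (n + 1) i - u (n + 1) j = c n * (u n i - u n j)) (n : ℕ) :
    (⨆ i, ⨆ j, |u n i - u n j|) = (∏ k ∈ Finset.range n, |c k|) * ⨆ i, ⨆ j, |u 0 i - u 0 j| := by
  induction n with
  | zero => simp
  | succ n ih =>
    rw [iSup_iSup_abs_sub_of_sub_eq_mul (hu n), ih, Finset.prod_range_succ]
    ring

end Diameter

theorem adCBO_pathwise_diameter_general
    {Ω : Type*}
    (d N : ℕ) (h lam0 lam1 sigma : ℝ)
    (W : ℕ → Ω → Fin d → ℝ) (x : ℕ → Fin N → Ω → Fin d → ℝ)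
    (M : ℕ → Ω → Fin d → ℝ)
    -- the Ad-CBO recursion
    (hrec : ∀ n i ω l,
      x (n+1) i ω l = x n i ω l - lam0 * h * (x n i ω l - M n ω l)
        - lam1 * h * ((1 / (N : ℝ)) * ∑ j, x n j ω l - M n ω l)
        - sigma * (x n i ω l - M n ω l) * W n ω l)
    :
    ∀ (ω : Ω) (n : ℕ) (l : Fin d),
      (⨆ i : Fin N, ⨆ j : Fin N, |x n i ω l - x n j ω l|)
        = (∏ k ∈ Finset.range n, |1 - lam0 * h - sigma * W k ω l|)
          * ⨆ i : Fin N, ⨆ j : Fin N, |x 0 i ω l - x 0 j ω l| := by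
  intro ω n l
  refine iSup_iSup_abs_sub_eq_prod_of_sub_eq_mul (u := fun n i => x n i ω l)
    (c := fun k => 1 - lam0 * h - sigma * W k ω l) (fun n i j => ?_) n
  rw [hrec n i ω l, hrec n j ω l]
  exact sub_cbo_step_sub_cbo_step _ _ _ _ _ _ _ _

/-- Pathwise identity for the coordinatewise diameter of the swarm. -/
theorem adCBO_pathwise_diameter
    {Ω : Type*} [MeasurableSpace Ω] (P : Measure Ω) [IsProbabilityMeasure P]
    (d N : ℕ) (h lam0 lam1 sigma : ℝ)
    (hN : 0 < N) (hh : 0 < h) (hlam0 : 0 < lam0) (hlam1 : 0 ≤ lam1) (hsigma : 0 ≤ sigma)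
    (W : ℕ → Ω → Fin d → ℝ) (x : ℕ → Fin N → Ω → Fin d → ℝ)
    (M : ℕ → Ω → Fin d → ℝ)
    (hWmeas : ∀ n, Measurable (W n))
    (hxmeas : ∀ n i, Measurable (x n i))
    -- all scalar noise components (over time and coordinate) are independent,
    -- each distributed as `N(0, h)`
    (hWindep : iIndepFun
      (fun (p : ℕ × Fin d) ω => W p.1 ω p.2) P)
    (hWlaw : ∀ n l, Measure.map (fun ω => W n ω l) P
      = gaussianReal 0 (Real.toNNReal h))
    -- `W_{h,n}` is independent of `σ(x_0^1, …, x_0^N, W_{h,0}, …, W_{h,n−1})`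
    (hWpast : ∀ n, Indep (MeasurableSpace.comap (W n) inferInstance)
      ((⨆ i : Fin N, MeasurableSpace.comap (x 0 i) inferInstance) ⊔
        (⨆ k : Fin n, MeasurableSpace.comap (W k) inferInstance)) P)
    -- `M_n` is measurable w.r.t. `σ(x_0^1, …, x_0^N, W_{h,0}, …, W_{h,n−1})`
    (hMmeas : ∀ n, @Measurable Ω (Fin d → ℝ)
      ((⨆ i : Fin N, MeasurableSpace.comap (x 0 i) inferInstance) ⊔
        (⨆ k : Fin n, MeasurableSpace.comap (W k) inferInstance)) _ (M n))
    -- the Ad-CBO recursion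
    (hrec : ∀ n i ω l,
      x (n+1) i ω l = x n i ω l - lam0 * h * (x n i ω l - M n ω l)
        - lam1 * h * ((1 / (N : ℝ)) * ∑ j, x n j ω l - M n ω l)
        - sigma * (x n i ω l - M n ω l) * W n ω l)
    :
    ∀ (ω : Ω) (n : ℕ) (l : Fin d),
      (⨆ i : Fin N, ⨆ j : Fin N, |x n i ω l - x n j ω l|)
        = (∏ k ∈ Finset.range n, |1 - lam0 * h - sigma * W k ω l|)
          * ⨆ i : Fin N, ⨆ j : Fin N, |x 0 i ω l - x 0 j ω l| :=
  adCBO_pathwise_diameter_general d N h lam0 lam1 sigma W x M hrec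
end

section
/- Suppose h > 0, 0 < λ₀h < 1, σ > 0, and σ√h < (1 − λ₀h)/y*, where y* is the unique positive root of g(y) := (1/y)√(π/2) exp(−y²/2) + erf(y/√2) − 1/(1 − λ₀h). Then for a Gaussian random variable η_h ~ N(0,h), E|1 − λ₀h + σ η_h| < 1. -/
/-! For `X ~ N(μ, v)`, writing `|x| = x + 2 max(-x, 0)` and using the symmetry of the centred
density gives the folded-normal mean `E|X| = μ erf(μ/√(2v)) + √(2v/π) exp(-μ²/(2v))`.
Apply it to `X = b + ση` with `b = 1 - λ₀h`, and put `y = b/(σ√h)`. The hypothesis on `σ√h` says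
`y* < y`; as `g` is eventually negative and `y*` is its only positive root, the intermediate value
theorem gives `g(y) < 0`. Since `√(2/π) < √(π/2)`, `E|X| < b g(y) + 1 < 1`. -/

open MeasureTheory ProbabilityTheory

noncomputable def erf (t : ℝ) : ℝ :=
  (2 / Real.sqrt Real.pi) * ∫ u in (0:ℝ)..t, Real.exp (-u ^ 2)

noncomputable def gfun (a y : ℝ) : ℝ :=
  (1 / y) * Real.sqrt (Real.pi / 2) * Real.exp (-y ^ 2 / 2)
    + erf (y / Real.sqrt 2) - 1 / (1 - a)

open Real Set Filter Topology
open scoped NNReal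

lemma integrable_exp_neg_sq : Integrable fun u : ℝ ↦ exp (-u ^ 2) := by
  simpa using integrable_exp_neg_mul_sq one_pos

lemma intervalIntegral_exp_neg_sq (t : ℝ) : ∫ u in (0 : ℝ)..t, exp (-u ^ 2) = √π / 2 * erf t := by
  have : √π ≠ 0 := (sqrt_pos.2 pi_pos).ne'
  unfold erf
  field_simp

@[fun_prop]
lemma continuous_erf : Continuous erf :=
  continuous_const.mul (intervalIntegral.continuous_primitive
    (fun _ _ ↦ integrable_exp_neg_sq.intervalIntegrable) 0)

lemma erf_le_one (t : ℝ) : erf t ≤ 1 := by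
  have hsplit := intervalIntegral.integral_interval_add_Ioi (a := 0) (b := t)
    integrable_exp_neg_sq.integrableOn integrable_exp_neg_sq.integrableOn
  have htail : 0 ≤ ∫ u in Ioi t, exp (-u ^ 2) :=
    setIntegral_nonneg measurableSet_Ioi fun _ _ ↦ (exp_pos _).le
  rw [intervalIntegral_exp_neg_sq, show ∫ u in Ioi (0 : ℝ), exp (-u ^ 2) = √π / 2 by
    simpa using integral_gaussian_Ioi 1] at hsplit
  nlinarith [sqrt_pos.2 pi_pos]

lemma gfun_le (a : ℝ) {y : ℝ} (hy : 0 < y) : gfun a y ≤ √(π / 2) / y + 1 - 1 / (1 - a) := by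
  have hexp : exp (-y ^ 2 / 2) ≤ 1 := exp_le_one_iff.2 (by nlinarith)
  have hcoef : 0 ≤ √(π / 2) / y := by positivity
  have := erf_le_one (y / √2)
  unfold gfun
  rw [one_div_mul_eq_div]
  nlinarith

lemma eventually_gfun_neg {a : ℝ} (ha0 : 0 < a) (ha1 : a < 1) : ∀ᶠ y in atTop, gfun a y < 0 := by
  have hlim : Tendsto (fun y ↦ √(π / 2) / y + 1 - 1 / (1 - a)) atTop (𝓝 (0 + 1 - 1 / (1 - a))) :=
    ((tendsto_const_nhds.div_atTop tendsto_id).add_const 1).sub_const _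
  have hneg : 0 + 1 - 1 / (1 - a) < 0 := by
    rw [zero_add, sub_neg, lt_one_div one_pos (by linarith)]
    linarith
  filter_upwards [hlim.eventually (gt_mem_nhds hneg), eventually_gt_atTop 0] with y hy hy0
  exact (gfun_le a hy0).trans_lt hy

lemma continuousOn_gfun (a : ℝ) : ContinuousOn (gfun a) (Ioi 0) := by
  have hinv : ContinuousOn (fun y : ℝ ↦ 1 / y) (Ioi 0) :=
    continuousOn_const.div continuousOn_id fun y hy ↦ (mem_Ioi.1 hy).ne'
  unfold gfun
  fun_prop

lemma gfun_neg_of_unique_root_lt {a ystar y : ℝ} (ha0 : 0 < a) (ha1 : a < 1) (hystar : 0 < ystar)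
    (huniq : ∀ z, 0 < z → gfun a z = 0 → z = ystar) (hy : ystar < y) : gfun a y < 0 := by
  have hy0 : 0 < y := hystar.trans hy
  obtain ⟨Y, hYneg, hyY⟩ := ((eventually_gfun_neg ha0 ha1).and (eventually_ge_atTop y)).exists
  by_contra! hpos
  obtain ⟨c, hc, hc0⟩ := intermediate_value_Icc' hyY
    ((continuousOn_gfun a).mono fun z hz ↦ hy0.trans_le hz.1) ⟨hYneg.le, hpos⟩
  exact (hy.trans_le hc.1).ne' (huniq c (hy0.trans_le hc.1) hc0)

lemma hasDerivAt_gaussianPDFReal (μ : ℝ) (v : ℝ≥0) (x : ℝ) :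
    HasDerivAt (gaussianPDFReal μ v) (-((x - μ) / v) * gaussianPDFReal μ v x) x := by
  rw [gaussianPDFReal_def]
  refine (((((hasDerivAt_id x).sub_const μ).fun_pow 2).fun_neg.div_const (2 * (v : ℝ))).exp.const_mul
    (√(2 * π * v))⁻¹).congr_deriv ?_
  simp only [id]
  ring

lemma tendsto_gaussianPDFReal_atTop (μ : ℝ) (v : ℝ≥0) :
    Tendsto (gaussianPDFReal μ v) atTop (𝓝 0) := by
  rcases eq_or_ne v 0 with rfl | hv
  · rw [gaussianPDFReal_zero_var]
    exact tendsto_const_nhds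
  have hsq : Tendsto (fun x ↦ (x - μ) ^ 2) atTop atTop :=
    (tendsto_pow_atTop two_ne_zero).comp (tendsto_atTop_add_const_right _ (-μ) tendsto_id)
  have := (tendsto_exp_atBot.comp ((tendsto_neg_atTop_atBot.comp hsq).atBot_div_const
    (by positivity : (0 : ℝ) < 2 * v))).const_mul (√(2 * π * v))⁻¹
  simpa [gaussianPDFReal_def, Function.comp_def] using this

lemma integrable_mul_gaussianPDFReal (v : ℝ≥0) : Integrable fun x ↦ x * gaussianPDFReal 0 v x := by
  rcases eq_or_ne v 0 with rfl | hv
  · simp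
  refine ((integrable_mul_exp_neg_mul_sq (b := (2 * v : ℝ)⁻¹) (by positivity)).const_mul
    (√(2 * π * v))⁻¹).congr (ae_of_all _ fun x ↦ ?_)
  simp only [gaussianPDFReal_def, sub_zero]
  ring_nf

lemma integral_Ioi_mul_gaussianPDFReal (v : ℝ≥0) (m : ℝ) :
    ∫ x in Ioi m, x * gaussianPDFReal 0 v x = v * gaussianPDFReal 0 v m := by
  have hderiv (x : ℝ) (_ : x ∈ Ici m) :
      HasDerivAt (fun x ↦ -v * gaussianPDFReal 0 v x) (x * gaussianPDFReal 0 v x) x := by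
    refine ((hasDerivAt_gaussianPDFReal 0 v x).const_mul (-(v : ℝ))).congr_deriv ?_
    rcases eq_or_ne v 0 with rfl | hv
    · simp [gaussianPDFReal_zero_var]
    · field_simp
      ring
  rw [integral_Ioi_of_hasDerivAt_of_tendsto' hderiv (integrable_mul_gaussianPDFReal v).integrableOn
    (by simpa using (tendsto_gaussianPDFReal_atTop 0 v).const_mul (-(v : ℝ)))]
  ring

lemma intervalIntegral_gaussianPDFReal {v : ℝ≥0} (hv : v ≠ 0) (m : ℝ) :
    ∫ x in (0 : ℝ)..m, gaussianPDFReal 0 v x = erf (m / √(2 * v)) / 2 := by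
  have hc : 0 < √(2 * v) := by positivity
  have hpdf (x : ℝ) : gaussianPDFReal 0 v x = (√(2 * π * v))⁻¹ * exp (-(x / √(2 * v)) ^ 2) := by
    simp only [gaussianPDFReal_def, sub_zero]
    rw [div_pow, sq_sqrt (by positivity), neg_div]
  simp_rw [hpdf]
  rw [intervalIntegral.integral_const_mul, intervalIntegral.integral_comp_div (fun u ↦ exp (-u ^ 2))
    hc.ne', zero_div, intervalIntegral_exp_neg_sq, smul_eq_mul,
    show 2 * π * v = (2 * v) * π by ring, sqrt_mul (by positivity)]
  field_simp

lemma integral_Ioi_zero_gaussianPDFReal {v : ℝ≥0} (hv : v ≠ 0) :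
    ∫ x in Ioi 0, gaussianPDFReal 0 v x = 1 / 2 := by
  have h := integral_gaussian_Ioi (2 * v : ℝ)⁻¹
  rw [show π / (2 * v : ℝ)⁻¹ = 2 * π * v by field_simp] at h
  simp only [neg_mul, inv_mul_eq_div, ← neg_div] at h
  simp only [gaussianPDFReal_def, sub_zero, integral_const_mul, h]
  have : 0 < √(2 * π * v) := by positivity
  field_simp

lemma integral_Ioi_gaussianPDFReal {v : ℝ≥0} (hv : v ≠ 0) (m : ℝ) :
    ∫ x in Ioi m, gaussianPDFReal 0 v x = (1 - erf (m / √(2 * v))) / 2 := by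
  have h := intervalIntegral.integral_interval_add_Ioi (a := 0) (b := m)
    (integrable_gaussianPDFReal 0 v).integrableOn (integrable_gaussianPDFReal 0 v).integrableOn
  rw [intervalIntegral_gaussianPDFReal hv, integral_Ioi_zero_gaussianPDFReal hv] at h
  linarith

lemma integral_max_sub_zero_gaussianReal {v : ℝ≥0} (hv : v ≠ 0) (m : ℝ) :
    ∫ x, max (x - m) 0 ∂gaussianReal 0 v
      = v * gaussianPDFReal 0 v m - m * (1 - erf (m / √(2 * v))) / 2 := by
  have hind : (fun x ↦ gaussianPDFReal 0 v x • max (x - m) 0)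
      = (Ioi m).indicator fun x ↦ x * gaussianPDFReal 0 v x - m * gaussianPDFReal 0 v x := by
    ext x
    by_cases hx : m < x
    · simp [hx, hx.le]
      ring
    · simp [hx, not_lt.1 hx]
  rw [integral_gaussianReal_eq_integral_smul hv, hind, integral_indicator measurableSet_Ioi,
    integral_sub (integrable_mul_gaussianPDFReal v).integrableOn
      ((integrable_gaussianPDFReal 0 v).const_mul m).integrableOn,
    integral_const_mul, integral_Ioi_mul_gaussianPDFReal, integral_Ioi_gaussianPDFReal hv]
  ring

lemma integral_abs_gaussianReal (μ : ℝ) {v : ℝ≥0} (hv : v ≠ 0) :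
    ∫ x, |x| ∂gaussianReal μ v
      = μ * erf (μ / √(2 * v)) + √(2 * v / π) * exp (-μ ^ 2 / (2 * v)) := by
  have hshift : ∫ x, |x| ∂gaussianReal μ v = ∫ x, |x + μ| ∂gaussianReal 0 v := by
    have := gaussianReal_map_add_const (μ := 0) (v := v) μ
    rw [zero_add] at this
    rw [← this, integral_map (by fun_prop) (by fun_prop)]
  have hsymm : ∫ x, max (-(x + μ)) 0 ∂gaussianReal 0 v = ∫ x, max (x - μ) 0 ∂gaussianReal 0 v := by
    have := gaussianReal_map_neg (μ := 0) (v := v)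
    rw [neg_zero] at this
    conv_rhs => rw [← this, integral_map (by fun_prop) (by fun_prop)]
    congr with x
    ring_nf
  have hsplit (x : ℝ) : |x + μ| = (x + μ) + 2 * max (-(x + μ)) 0 := by
    rcases le_total 0 (x + μ) with h | h
    · rw [abs_of_nonneg h, max_eq_right (by linarith)]
      ring
    · rw [abs_of_nonpos h, max_eq_left (by linarith)]
      ring
  have hid : Integrable (fun x ↦ x) (gaussianReal 0 v) := (memLp_id_gaussianReal 1).integrable le_rfl
  have hint : Integrable (fun x ↦ x + μ) (gaussianReal 0 v) := hid.add (integrable_const μ)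
  have hmax : Integrable (fun x ↦ 2 * max (-(x + μ)) 0) (gaussianReal 0 v) :=
    hint.neg.pos_part.const_mul 2
  rw [hshift, integral_congr_ae (ae_of_all _ hsplit), integral_add hint hmax,
    integral_add hid (integrable_const μ),
    integral_id_gaussianReal, integral_const, integral_const_mul, hsymm,
    integral_max_sub_zero_gaussianReal hv]
  have hcoef : 2 * v * (√(2 * π * v))⁻¹ = √(2 * v / π) := by
    rw [← sqrt_sq (by positivity : 0 ≤ 2 * v * (√(2 * π * v))⁻¹), mul_pow, inv_pow,
      sq_sqrt (by positivity)]
    congr 1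
    field_simp
  simp only [gaussianPDFReal_def, sub_zero, probReal_univ, one_smul, ← hcoef]
  ring

lemma mul_erf_add_lt_one_of_gfun_neg {a s : ℝ} (ha : a < 1) (hs : 0 < s)
    (hg : gfun a ((1 - a) / s) < 0) :
    (1 - a) * erf ((1 - a) / √(2 * s ^ 2))
      + √(2 * s ^ 2 / π) * exp (-(1 - a) ^ 2 / (2 * s ^ 2)) < 1 := by
  set b := 1 - a
  set y := b / s
  have hb : 0 < b := sub_pos.2 ha
  have harg : b / √(2 * s ^ 2) = y / √2 := by
    rw [sqrt_mul zero_le_two, sqrt_sq hs.le, div_div, mul_comm]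
  have hexp : -b ^ 2 / (2 * s ^ 2) = -y ^ 2 / 2 := by
    simp only [y]
    field_simp
  have hcoef : √(2 * s ^ 2 / π) < s * √(π / 2) := by
    rw [show 2 * s ^ 2 / π = s ^ 2 * (2 / π) by ring, sqrt_mul (sq_nonneg _), sqrt_sq hs.le]
    gcongr <;> linarith [pi_gt_three]
  have hgfun : b * erf (y / √2) + s * √(π / 2) * exp (-y ^ 2 / 2) = b * gfun a y + 1 := by
    have hb0 : 1 - a ≠ 0 := hb.ne'
    simp only [gfun, y, b]
    field_simp
    ring
  rw [harg, hexp]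
  calc _ < b * erf (y / √2) + s * √(π / 2) * exp (-y ^ 2 / 2) := by gcongr
    _ = b * gfun a y + 1 := hgfun
    _ < 1 := by nlinarith [mul_neg_of_pos_of_neg hb hg]

theorem expected_abs_lt_one_general
    {Ω : Type*} [MeasurableSpace Ω] (P : Measure Ω)
    (h lam0 sigma ystar : ℝ)
    (hh : 0 < h) (hl0 : 0 < lam0 * h) (hl1 : lam0 * h < 1) (hs : 0 < sigma)
    (hystar_pos : 0 < ystar)
    (hystar_unique : ∀ y : ℝ, 0 < y → gfun (lam0 * h) y = 0 → y = ystar)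
    (hcond : sigma * Real.sqrt h < (1 - lam0 * h) / ystar)
    (η : Ω → ℝ)
    (hlawη : Measure.map η P = gaussianReal 0 (Real.toNNReal h)) :
    ∫ ω, |1 - lam0 * h + sigma * η ω| ∂P < 1 := by
  set a := lam0 * h
  set s := sigma * √h
  have hs_pos : 0 < s := by positivity
  have hη : HasLaw η (gaussianReal 0 h.toNNReal) P :=
    ⟨.of_map_ne_zero (hlawη ▸ IsProbabilityMeasure.ne_zero _), hlawη⟩
  obtain ⟨v, hv, hlaw⟩ : ∃ v : ℝ≥0, (v : ℝ) = s ^ 2 ∧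
      HasLaw (fun ω ↦ 1 - a + sigma * η ω) (gaussianReal (1 - a) v) P := by
    have hlaw := gaussianReal_const_add (gaussianReal_const_mul hη sigma) (1 - a)
    rw [mul_zero, zero_add] at hlaw
    refine ⟨_, ?_, hlaw⟩
    rw [NNReal.coe_mul, NNReal.coe_mk, Real.coe_toNNReal _ hh.le, mul_pow, sq_sqrt hh.le]
  have hv0 : v ≠ 0 := by
    rw [← NNReal.coe_ne_zero, hv]
    positivity
  have hystar_lt : ystar < (1 - a) / s := by
    rwa [lt_div_iff₀ hs_pos, mul_comm, ← lt_div_iff₀ hystar_pos]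
  have hg : gfun a ((1 - a) / s) < 0 :=
    gfun_neg_of_unique_root_lt hl0 hl1 hystar_pos hystar_unique hystar_lt
  have hmean := hlaw.integral_comp continuous_abs.aestronglyMeasurable
  rw [integral_abs_gaussianReal _ hv0, hv] at hmean
  exact hmean.trans_lt (mul_erf_add_lt_one_of_gfun_neg hl1 hs_pos hg)

/-- If `0 < λ₀h < 1`, `σ > 0` and `σ√h < (1 − λ₀h)/y*`, where `y*`
is the unique positive root of `g(y) = (1/y)√(π/2)e^{−y²/2} + erf(y/√2) − 1/(1−λ₀h)`,
then for `η_h ~ N(0,h)` one has `E|1 − λ₀h + σ η_h| < 1`. -/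
theorem expected_abs_lt_one
    {Ω : Type*} [MeasurableSpace Ω] (P : Measure Ω) [IsProbabilityMeasure P]
    (h lam0 sigma ystar : ℝ)
    (hh : 0 < h) (hl0 : 0 < lam0 * h) (hl1 : lam0 * h < 1) (hs : 0 < sigma)
    (hystar_pos : 0 < ystar) (hystar_root : gfun (lam0 * h) ystar = 0)
    (hystar_unique : ∀ y : ℝ, 0 < y → gfun (lam0 * h) y = 0 → y = ystar)
    (hcond : sigma * Real.sqrt h < (1 - lam0 * h) / ystar)
    (η : Ω → ℝ) (hη : Measurable η)
    (hlawη : Measure.map η P = gaussianReal 0 (Real.toNNReal h)) :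
    ∫ ω, |1 - lam0 * h + sigma * η ω| ∂P < 1 :=
  expected_abs_lt_one_general P h lam0 sigma ystar hh hl0 hl1 hs hystar_pos hystar_unique hcond η
    hlawη
end

section
/- Assume σ > 0. Then for every pair i ≠ j and every coordinate l ∈ {1,…,d}, almost surely on the event {x_0^{i,l} ≠ x_0^{j,l}} one has lim_{n→∞} (1/n) log |x_n^{i,l} − x_n^{j,l}| = E[ log |1 − hλ₀ − σ√h Z| ], where Z is a standard Gaussian random variable (in particular the right-hand side is a finite real number). -/
open MeasureTheory ProbabilityTheory Filter Finset Real
open scoped NNReal ENNReal Topology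

/-!
The drift towards `M_n` and towards the empirical mean is the same for all particles, so it cancels
in the difference of two of them: `x_{n+1}^{i,l} - x_{n+1}^{j,l}` is `x_n^{i,l} - x_n^{j,l}` times
`1 - hλ₀ - σ W_{h,n}^l`. These factors are i.i.d. `N(1 - hλ₀, σ²h)`, hence almost surely nonzero,
and `log |·|` is integrable against a nondegenerate Gaussian (its density is bounded near the
logarithmic singularity). Taking logarithms turns the product into a sum, and the strong law of
large numbers gives the exponent.
-/

lemma gaussianPDF_le (μ : ℝ) (v : ℝ≥0) (x : ℝ) :
    gaussianPDF μ v x ≤ ENNReal.ofReal (√(2 * π * v))⁻¹ := by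
  rw [gaussianPDF, gaussianPDFReal_def]
  refine ENNReal.ofReal_le_ofReal (mul_le_of_le_one_right (by positivity) ?_)
  exact exp_le_one_iff.mpr (div_nonpos_of_nonpos_of_nonneg (by nlinarith) (by positivity))

lemma gaussianReal_le_smul_volume (μ : ℝ) {v : ℝ≥0} (hv : v ≠ 0) :
    gaussianReal μ v ≤ ENNReal.ofReal (√(2 * π * v))⁻¹ • volume := by
  rw [gaussianReal_of_var_ne_zero μ hv, ← withDensity_const]
  exact withDensity_mono (ae_of_all _ (gaussianPDF_le μ v))

lemma integrable_log_abs_gaussianReal (μ : ℝ) {v : ℝ≥0} (hv : v ≠ 0) :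
    Integrable (fun y => log |y|) (gaussianReal μ v) := by
  have hnear : IntegrableOn (fun y => log |y|) (Set.Icc (-1) 1) (gaussianReal μ v) := by
    have hleb : IntegrableOn log (Set.Icc (-1) 1) :=
      (intervalIntegrable_iff_integrableOn_Icc_of_le (by norm_num)).mp
        intervalIntegral.intervalIntegrable_log'
    simp only [log_abs]
    refine (hleb.smul_measure (ENNReal.ofReal_ne_top (r := (√(2 * π * v))⁻¹))).mono_measure ?_
    rw [← Measure.restrict_smul]
    exact Measure.restrict_mono subset_rfl (gaussianReal_le_smul_volume μ hv)
  have hfar : IntegrableOn (fun y => log |y|) (Set.Icc (-1) 1)ᶜ (gaussianReal μ v) := by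
    refine Integrable.mono' ((memLp_id_gaussianReal 1).integrable le_rfl).abs.integrableOn
      (measurable_log.comp measurable_abs).aestronglyMeasurable ?_
    filter_upwards [ae_restrict_mem measurableSet_Icc.compl] with y hy
    have hy1 : 1 ≤ |y| := by
      rw [Set.mem_compl_iff, Set.mem_Icc, not_and_or] at hy
      cases hy <;> cases abs_cases y <;> linarith
    rw [norm_eq_abs, abs_of_nonneg (log_nonneg hy1)]
    exact log_le_self (abs_nonneg y)
  simpa using hnear.union hfar

section

variable {Ω : Type*} [MeasurableSpace Ω] {P : Measure Ω}

lemma gaussianReal_const_sub_mul {X : Ω → ℝ} {μ : ℝ} {v : ℝ≥0}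
    (hX : HasLaw X (gaussianReal μ v) P) (a c : ℝ) :
    HasLaw (fun ω => a - c * X ω)
      (gaussianReal (a - c * μ) (NNReal.mk (c ^ 2) (sq_nonneg c) * v)) P :=
  gaussianReal_const_sub (gaussianReal_const_mul hX c) a

lemma ae_ne_of_hasLaw_gaussianReal {X : Ω → ℝ} {μ : ℝ} {v : ℝ≥0}
    (hX : HasLaw X (gaussianReal μ v) P) (hv : v ≠ 0) (c : ℝ) :
    ∀ᵐ ω ∂P, X ω ≠ c := by
  have := nullSingletonClass_gaussianReal (μ := μ) hv
  exact ae_of_ae_map hX.aemeasurable (by rw [hX.map_eq]; exact Measure.ae_ne _ c)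

theorem ae_tendsto_average_comp_of_hasLaw {α : Type*} [MeasurableSpace α] {μ : Measure α}
    {X : ℕ → Ω → α} (hlaw : ∀ n, HasLaw (X n) μ P)
    (hindep : Pairwise fun m n => IndepFun (X m) (X n) P) {f : α → ℝ} (hf : Measurable f)
    (hfint : Integrable f μ) :
    ∀ᵐ ω ∂P, Tendsto (fun n : ℕ => (∑ k ∈ range n, f (X k ω)) / n) atTop (𝓝 (∫ y, f y ∂μ)) := by
  have hident : ∀ n, IdentDistrib (X n) (X 0) P P := fun n =>
    ⟨(hlaw n).aemeasurable, (hlaw 0).aemeasurable, by rw [(hlaw n).map_eq, (hlaw 0).map_eq]⟩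
  have hint : Integrable (f ∘ X 0) P :=
    ((hlaw 0).map_eq ▸ hfint).comp_aemeasurable (hlaw 0).aemeasurable
  have := strong_law_ae_real (fun n => f ∘ X n) hint (fun m n hmn => (hindep hmn).comp hf hf)
    (fun n => (hident n).comp hf)
  rwa [(hlaw 0).integral_comp hf.aestronglyMeasurable] at this

end

theorem tendsto_log_abs_div_of_mul_recurrence {D A : ℕ → ℝ} (hD : ∀ n, D (n + 1) = A n * D n)
    (hD0 : D 0 ≠ 0) (hA : ∀ n, A n ≠ 0) {L : ℝ}
    (hL : Tendsto (fun n : ℕ => (∑ k ∈ range n, log |A k|) / n) atTop (𝓝 L)) :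
    Tendsto (fun n : ℕ => (1 / (n : ℝ)) * log |D n|) atTop (𝓝 L) := by
  have hDne : ∀ n, D n ≠ 0 := by
    intro n
    induction n with
    | zero => exact hD0
    | succ n ih => rw [hD]; exact mul_ne_zero (hA n) ih
  have hlog : ∀ n, log |D n| = log |D 0| + ∑ k ∈ range n, log |A k| := by
    intro n
    induction n with
    | zero => simp
    | succ n ih =>
      rw [hD, abs_mul, log_mul (abs_ne_zero.mpr (hA n)) (abs_ne_zero.mpr (hDne n)), ih,
        sum_range_succ]
      ring
  have hconst : Tendsto (fun n : ℕ => log |D 0| * (1 / (n : ℝ))) atTop (𝓝 0) := by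
    simpa using tendsto_one_div_atTop_nhds_zero_nat.const_mul (log |D 0|)
  rw [← zero_add L]
  convert hconst.add hL using 2 with n
  rw [hlog]
  ring

theorem adCBO_lyapunov_exponent_general
    {Ω : Type*} [MeasurableSpace Ω] (P : Measure Ω)
    (d N : ℕ) (h lam0 lam1 sigma : ℝ)
    (hh : 0 < h) (hsigma : 0 < sigma)
    (W : ℕ → Ω → Fin d → ℝ) (x : ℕ → Fin N → Ω → Fin d → ℝ)
    (M : ℕ → Ω → Fin d → ℝ)
    (hWmeas : ∀ n, Measurable (W n))
    -- all scalar noise components (over time and coordinate) are independent,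
    -- each distributed as `N(0, h)`
    (hWindep : iIndepFun
      (fun (p : ℕ × Fin d) ω => W p.1 ω p.2) P)
    (hWlaw : ∀ n l, Measure.map (fun ω => W n ω l) P
      = gaussianReal 0 (Real.toNNReal h))
    -- the Ad-CBO recursion
    (hrec : ∀ n i ω l,
      x (n+1) i ω l = x n i ω l - lam0 * h * (x n i ω l - M n ω l)
        - lam1 * h * ((1 / (N : ℝ)) * ∑ j, x n j ω l - M n ω l)
        - sigma * (x n i ω l - M n ω l) * W n ω l) :
    ∀ i j : Fin N, i ≠ j → ∀ l : Fin d,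
      (∀ᵐ ω ∂P, x 0 i ω l ≠ x 0 j ω l →
        Tendsto (fun n : ℕ => (1 / (n : ℝ)) * Real.log |x n i ω l - x n j ω l|)
          atTop (nhds (∫ z, Real.log |1 - h * lam0 - sigma * Real.sqrt h * z|
            ∂(gaussianReal 0 1))))
      ∧ Integrable
          (fun z => Real.log |1 - h * lam0 - sigma * Real.sqrt h * z|)
          (gaussianReal 0 1) := by
  intro i j _ l
  set v : ℝ≥0 := (sigma ^ 2 * h).toNNReal
  have hv : v ≠ 0 := (Real.toNNReal_pos.mpr (by positivity)).ne'
  have hfactor : ∀ n, HasLaw (fun ω => 1 - h * lam0 - sigma * W n ω l)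
      (gaussianReal (1 - h * lam0) v) P := fun n => by
    have hvar : NNReal.mk (sigma ^ 2) (sq_nonneg sigma) * h.toNNReal
        = (sigma ^ 2 * h).toNNReal := by
      rw [Real.toNNReal_mul (sq_nonneg _), Real.toNNReal_of_nonneg (sq_nonneg _)]
    simpa [hvar] using gaussianReal_const_sub_mul
      ⟨((measurable_pi_apply l).comp (hWmeas n)).aemeasurable, hWlaw n l⟩ (1 - h * lam0) sigma
  have hgauss : HasLaw (fun z => 1 - h * lam0 - sigma * √h * z)
      (gaussianReal (1 - h * lam0) v) (gaussianReal 0 1) := by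
    have hvar : NNReal.mk ((sigma * √h) ^ 2) (sq_nonneg _) * 1
        = (sigma ^ 2 * h).toNNReal := by
      rw [mul_one, ← Real.toNNReal_of_nonneg, mul_pow, sq_sqrt hh.le]
    simpa [hvar] using
      gaussianReal_const_sub_mul (HasLaw.id (μ := gaussianReal 0 1)) (1 - h * lam0) (sigma * √h)
  have hlog := integrable_log_abs_gaussianReal (1 - h * lam0) hv
  refine ⟨?_, (hgauss.map_eq ▸ hlog).comp_aemeasurable hgauss.aemeasurable⟩
  have hmean : ∫ z, log |1 - h * lam0 - sigma * √h * z| ∂gaussianReal 0 1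
      = ∫ y, log |y| ∂gaussianReal (1 - h * lam0) v :=
    hgauss.integral_comp (measurable_log.comp measurable_abs).aestronglyMeasurable
  have hφ : Measurable fun w : ℝ => 1 - h * lam0 - sigma * w := by fun_prop
  have hlln := ae_tendsto_average_comp_of_hasLaw hfactor
    (fun m n hmn => (hWindep.indepFun (i := (m, l)) (j := (n, l)) (by simpa using hmn)).comp
      hφ hφ) (measurable_log.comp measurable_abs) hlog
  have hnz : ∀ᵐ ω ∂P, ∀ n, 1 - h * lam0 - sigma * W n ω l ≠ 0 :=
    ae_all_iff.mpr fun n => ae_ne_of_hasLaw_gaussianReal (hfactor n) hv 0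
  rw [hmean]
  filter_upwards [hlln, hnz] with ω hω hnzω h0
  exact tendsto_log_abs_div_of_mul_recurrence (fun n => by rw [hrec, hrec]; ring)
    (sub_ne_zero.mpr h0) hnzω hω

/-- Lyapunov exponent of pairwise differences: for `σ > 0`,
almost surely on `{x_0^{i,l} ≠ x_0^{j,l}}`,
`(1/n) log|x_n^{i,l} − x_n^{j,l}| → E[log|1 − hλ₀ − σ√h·Z|]`, `Z ~ N(0,1)`,
and this expectation is a (finite) real number. -/
theorem adCBO_lyapunov_exponent
    {Ω : Type*} [MeasurableSpace Ω] (P : Measure Ω) [IsProbabilityMeasure P]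
    (d N : ℕ) (h lam0 lam1 sigma : ℝ)
    (hh : 0 < h) (hlam0 : 0 < lam0) (hlam1 : 0 ≤ lam1) (hsigma : 0 < sigma)
    (W : ℕ → Ω → Fin d → ℝ) (x : ℕ → Fin N → Ω → Fin d → ℝ)
    (M : ℕ → Ω → Fin d → ℝ)
    (hWmeas : ∀ n, Measurable (W n))
    (hxmeas : ∀ n i, Measurable (x n i))
    -- all scalar noise components (over time and coordinate) are independent,
    -- each distributed as `N(0, h)`
    (hWindep : iIndepFun
      (fun (p : ℕ × Fin d) ω => W p.1 ω p.2) P)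
    (hWlaw : ∀ n l, Measure.map (fun ω => W n ω l) P
      = gaussianReal 0 (Real.toNNReal h))
    -- `W_{h,n}` is independent of `σ(x_0^1, …, x_0^N, W_{h,0}, …, W_{h,n−1})`
    (hWpast : ∀ n, Indep (MeasurableSpace.comap (W n) inferInstance)
      ((⨆ i : Fin N, MeasurableSpace.comap (x 0 i) inferInstance) ⊔
        (⨆ k : Fin n, MeasurableSpace.comap (W k) inferInstance)) P)
    -- `M_n` is measurable w.r.t. `σ(x_0^1, …, x_0^N, W_{h,0}, …, W_{h,n−1})`
    (hMmeas : ∀ n, @Measurable Ω (Fin d → ℝ)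
      ((⨆ i : Fin N, MeasurableSpace.comap (x 0 i) inferInstance) ⊔
        (⨆ k : Fin n, MeasurableSpace.comap (W k) inferInstance)) _ (M n))
    -- the Ad-CBO recursion
    (hrec : ∀ n i ω l,
      x (n+1) i ω l = x n i ω l - lam0 * h * (x n i ω l - M n ω l)
        - lam1 * h * ((1 / (N : ℝ)) * ∑ j, x n j ω l - M n ω l)
        - sigma * (x n i ω l - M n ω l) * W n ω l)
    -- the initial data are independent of all the noises
    (hx0W : Indep (⨆ i : Fin N, MeasurableSpace.comap (x 0 i) inferInstance)
      (⨆ n : ℕ, MeasurableSpace.comap (W n) inferInstance) P) :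
    ∀ i j : Fin N, i ≠ j → ∀ l : Fin d,
      (∀ᵐ ω ∂P, x 0 i ω l ≠ x 0 j ω l →
        Tendsto (fun n : ℕ => (1 / (n : ℝ)) * Real.log |x n i ω l - x n j ω l|)
          atTop (nhds (∫ z, Real.log |1 - h * lam0 - sigma * Real.sqrt h * z|
            ∂(gaussianReal 0 1))))
      ∧ Integrable
          (fun z => Real.log |1 - h * lam0 - sigma * Real.sqrt h * z|)
          (gaussianReal 0 1) :=
  adCBO_lyapunov_exponent_general P d N h lam0 lam1 sigma hh hsigma W x M hWmeas hWindep hWlaw hrec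
end
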